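/- arXiv:2603.04561 — 2 statements merged into one kernel-verified Lean document; each statement's English description precedes it below -/
import Mathlib

section
/- The split Casimir element Ĉ of so_{2r} in the square of the spinor representation satisfies the degree-(r+1) characteristic identity Π_{k=0}^{r} ( Ĉ − c_k·(1⊗1) ) = 0 in Cl ⊗ Cl, where c_k := (2k(2r−k) − r(2r−1))/(16(r−1)). -/
open scoped TensorProduct

noncomputable section

/-- The quadratic form `x₁² + ⋯ + x_{2r}²` on `ℂ^{2r}`. -/
def Qf (r : ℕ) : QuadraticForm ℂ (Fin (2*r) → ℂ) :=
  QuadraticMap.weightedSumSquares ℂ (fun _ : Fin (2*r) => (1:ℂ))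

/-- The Clifford algebra of `Qf r`. -/
abbrev Cl (r : ℕ) := CliffordAlgebra (Qf r)

/-- The generators `Γ_i`. -/
def Γgen (r : ℕ) (i : Fin (2*r)) : Cl r :=
  CliffordAlgebra.ι (Qf r) (Pi.single i 1)

/-- The antisymmetrised products `Γ_{[i₁…i_k]}`. -/
def Γbr (r k : ℕ) (i : Fin k → Fin (2*r)) : Cl r :=
  ((k.factorial : ℂ))⁻¹ •
    ∑ σ : Equiv.Perm (Fin k),
      ((Equiv.Perm.sign σ : ℤ) : ℂ) • (List.ofFn fun j => Γgen r (i (σ j))).prod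

/-- The invariants `I_k ∈ Cl ⊗ Cl`. -/
def Ik (r k : ℕ) : Cl r ⊗[ℂ] Cl r :=
  ∑ i : Fin k → Fin (2*r), (Γbr r k i) ⊗ₜ[ℂ] (Γbr r k i)

/-- The split Casimir element `Ĉ = −I₂/(16(2r−2))`. -/
def sC (r : ℕ) : Cl r ⊗[ℂ] Cl r := (-(16*(2*(r:ℂ)-2))⁻¹) • Ik r 2

/-- The top element `Γ_{2r+1} = (−i)^r Γ₁⋯Γ_{2r}`. -/
def Γtop (r : ℕ) : Cl r :=
  ((-Complex.I)^r) • (List.ofFn fun i : Fin (2*r) => Γgen r i).prod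

/-- The chirality projector `p_ε = (1 + ε Γ_{2r+1})/2`. -/
def pCh (r : ℕ) (ε : ℂ) : Cl r := (2:ℂ)⁻¹ • (1 + ε • Γtop r)

/-- The chirality projectors `p_{εε'} = p_ε ⊗ p_{ε'}`. -/
def ppCh (r : ℕ) (ε ε' : ℂ) : Cl r ⊗[ℂ] Cl r := (pCh r ε) ⊗ₜ[ℂ] (pCh r ε')

/-- The eigenvalues `c_k = (2k(2r−k) − r(2r−1))/(16(r−1))`. -/
def cEv (r k : ℕ) : ℂ :=
  (2*(k:ℂ)*(2*(r:ℂ)-(k:ℂ)) - (r:ℂ)*(2*(r:ℂ)-1)) / (16*((r:ℂ)-1))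

/-- The spectral projectors `P_k = Π_{j≠k} (Ĉ − c_j)/(c_k − c_j)`. -/
def Pk (r k : ℕ) : Cl r ⊗[ℂ] Cl r :=
  (((List.range (r+1)).filter (fun j => j ≠ k)).map
    (fun j => (cEv r k - cEv r j)⁻¹ • (sC r - cEv r j • 1))).prod

/-- `P_r^S = (p_{++} + p_{−−})·P_r`. -/
def PrS (r : ℕ) : Cl r ⊗[ℂ] Cl r := (ppCh r 1 1 + ppCh r (-1) (-1)) * Pk r r

/-- The ascending factorial `a_k(u) = (u/2)(u/2+1)⋯(u/2+k−1)`. -/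
def asc (u : ℂ) (k : ℕ) : ℂ := ∏ j ∈ Finset.range k, (u/2 + (j:ℂ))

/-! ### Auxiliary lemmas for the proof -/

section AuxGeneral

variable {B : Type*} [Ring B] [Algebra ℂ B]

lemma aux_comm_fac {T S : B} (h : Commute T S) (c d : ℂ) :
    Commute (T - c • 1) (S - d • 1) := by
  refine Commute.sub_left (Commute.sub_right ?_ ?_) (Commute.sub_right ?_ ?_)
  · exact h
  · exact Commute.smul_right (Commute.one_right T) d
  · exact Commute.smul_left (Commute.one_left S) c
  · exact Commute.smul_right (Commute.smul_left (Commute.refl 1) c) d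

lemma aux_shift_prod (T' a : B) (ε : ℂ) (w : B) (hw : a * w = ε • w)
    (hcomm : Commute a T') (l : List ℂ) :
    ((l.map (fun c => (T' + a) - c • 1)).prod) * w
      = ((l.map (fun c => (T' + ε • 1) - c • 1)).prod) * w := by
  have hε : Commute a ((ε:ℂ) • (1:B)) := Commute.smul_right (Commute.one_right a) ε
  have hTT : Commute (T' + a) (T' + ε • 1) :=
    Commute.add_left (Commute.add_right (Commute.refl T')
      (Commute.smul_right (Commute.one_right T') ε)) (Commute.add_right hcomm hε)
  have hSS : Commute (T' + ε • 1) (T' + ε • 1) := Commute.refl _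
  induction l with
  | nil => rfl
  | cons c l ih =>
    simp only [List.map_cons, List.prod_cons]
    rw [mul_assoc, ih, ← mul_assoc]
    have hc1 : Commute ((T' + a) - c • 1) ((l.map (fun c => (T' + ε • 1) - c • 1)).prod) :=
      Commute.list_prod_right _ _ (fun x hx => by
        obtain ⟨d, _, rfl⟩ := List.mem_map.mp hx; exact aux_comm_fac hTT c d)
    have hc2 : Commute ((T' + ε • 1) - c • 1) ((l.map (fun c => (T' + ε • 1) - c • 1)).prod) :=
      Commute.list_prod_right _ _ (fun x hx => by
        obtain ⟨d, _, rfl⟩ := List.mem_map.mp hx; exact aux_comm_fac hSS c d)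
    have hfw : ((T' + a) - c • 1) * w = ((T' + ε • 1) - c • 1) * w := by
      rw [sub_mul, sub_mul, add_mul, add_mul, hw]
      simp only [smul_mul_assoc, one_mul]
    rw [hc1.eq, mul_assoc, hfw, ← mul_assoc, ← hc2.eq]

/-- The key characteristic identity for a sum of `n` pairwise-commuting involutions:
`∏_{j=0}^{n} (T - (2j - n)·1) = 0`. -/
lemma aux_Flem : ∀ (n : ℕ) (A : Fin n → B), (∀ i, A i * A i = 1) →
    (∀ i j, A i * A j = A j * A i) →
    (((List.range (n+1)).map (fun (j : ℕ) => (∑ i, A i) - (2*(j:ℂ) - (n:ℂ)) • 1)).prod) = 0 := by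
  intro n
  induction n with
  | zero =>
    intro A _ _
    simp [List.range_succ]
  | succ n ih =>
    intro A hsq hcm
    have ihA := ih (fun i => A (Fin.castSucc i)) (fun i => hsq _) (fun i j => hcm _ _)
    set T' : B := ∑ i : Fin n, A (Fin.castSucc i) with hT'
    set a : B := A (Fin.last n) with ha
    have hsum : (∑ i : Fin (n+1), A i) = T' + a := Fin.sum_univ_castSucc A
    have haT' : Commute a T' := by
      show a * T' = T' * a
      rw [hT', Finset.mul_sum, Finset.sum_mul]
      exact Finset.sum_congr rfl (fun i _ => hcm _ _)
    set u : B := (2:ℂ)⁻¹ • (1 + a) with hu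
    set v : B := (2:ℂ)⁻¹ • (1 - a) with hv
    have huv : u + v = 1 := by
      rw [hu, hv, ← smul_add]
      have h12 : (1 + a) + (1 - a) = (2:ℂ) • (1:B) := by rw [two_smul]; abel
      rw [h12, smul_smul]
      norm_num
    have hau : a * u = (1:ℂ) • u := by
      rw [hu, mul_smul_comm, one_smul, mul_add, mul_one, hsq, add_comm]
    have hav : a * v = (-1:ℂ) • v := by
      rw [hv, mul_smul_comm, mul_sub, mul_one, hsq, neg_smul, one_smul, ← smul_neg]
      congr 1
      abel
    set sl : List ℂ := (List.range (n+2)).map (fun (j : ℕ) => 2*(j:ℂ) - ((n:ℂ)+1)) with hsl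
    have hLu := aux_shift_prod T' a 1 u hau haT' sl
    have hLv := aux_shift_prod T' a (-1) v hav haT' sl
    have keyu : ((sl.map (fun c => (T' + (1:ℂ) • 1) - c • 1)).prod) = 0 := by
      rw [hsl, List.map_map, show n+2 = (n+1)+1 from rfl, List.range_succ_eq_map, List.map_cons,
        List.prod_cons, List.map_map]
      have h2 : (((fun c => (T' + (1:ℂ) • 1) - c • 1) ∘ (fun (j : ℕ) => 2*(j:ℂ) - ((n:ℂ)+1))) ∘ Nat.succ)
          = fun (j : ℕ) => T' - (2*(j:ℂ) - (n:ℂ)) • 1 := by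
        funext j
        simp only [Function.comp_apply, one_smul, Nat.cast_succ]
        have h3 : (2*((j:ℂ)+1) - ((n:ℂ)+1)) = (2*(j:ℂ) - (n:ℂ)) + 1 := by ring
        rw [h3, add_smul, one_smul]
        abel
      rw [h2, ihA, mul_zero]
    have keyv : ((sl.map (fun c => (T' + (-1:ℂ) • 1) - c • 1)).prod) = 0 := by
      rw [hsl, List.map_map]
      have h2 : ((fun c => (T' + (-1:ℂ) • 1) - c • 1) ∘ (fun (j : ℕ) => 2*(j:ℂ) - ((n:ℂ)+1)))
          = fun (j : ℕ) => T' - (2*(j:ℂ) - (n:ℂ)) • 1 := by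
        funext j
        simp only [Function.comp_apply, neg_smul, one_smul]
        have h3 : (2*(j:ℂ) - ((n:ℂ)+1)) = (2*(j:ℂ) - (n:ℂ)) - 1 := by ring
        rw [h3, sub_smul, one_smul]
        abel
      rw [h2, show n+2 = (n+1)+1 from rfl, List.range_succ, List.map_append, List.prod_append,
        ihA, zero_mul]
    have hgoal : ((sl.map (fun c => (T' + a) - c • 1)).prod) = 0 := by
      calc (sl.map (fun c => (T' + a) - c • 1)).prod
          = (sl.map (fun c => (T' + a) - c • 1)).prod * (u + v) := by rw [huv, mul_one]
        _ = 0 := by rw [mul_add, hLu, hLv, keyu, keyv, zero_mul, zero_mul, add_zero]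
    have hfun : (fun (j : ℕ) => (∑ i : Fin (n+1), A i) - (2*(j:ℂ) - ((n+1 : ℕ):ℂ)) • 1)
        = ((fun c => (T' + a) - c • 1) ∘ (fun (j : ℕ) => 2*(j:ℂ) - ((n:ℂ)+1))) := by
      funext j
      simp only [Function.comp_apply, hsum]
      push_cast
      ring_nf
    rw [hfun, ← List.map_map]
    exact hgoal

lemma aux_smul_list_prod (s : ℂ) (g : ℕ → B) :
    ∀ l : List ℕ, ((l.map (fun k => s • g k)).prod) = s ^ l.length • ((l.map g).prod)
  | [] => by simp
  | (k :: l) => by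
    simp only [List.map_cons, List.prod_cons, List.length_cons, aux_smul_list_prod s g l]
    rw [smul_mul_assoc, mul_smul_comm, smul_smul, pow_succ, mul_comm (s ^ l.length) s]

omit [Algebra ℂ B] in
lemma aux_flatten_pairs (F G : ℕ → B) :
    ∀ l : List ℕ, ((l.map (fun k => F k * G k)).prod) = ((l.flatMap (fun k => [F k, G k])).prod)
  | [] => by simp
  | (k :: l) => by
    simp only [List.map_cons, List.prod_cons, List.flatMap_cons, List.prod_append,
      aux_flatten_pairs F G l]
    simp [mul_assoc]

lemma aux_exp (T : B) (m : ℂ) : (T - m • 1) * (T - (-m) • 1) = T*T - (m*m) • 1 := by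
  simp only [sub_mul, mul_sub, smul_mul_assoc, mul_smul_comm, one_mul, mul_one, smul_smul,
    neg_smul, smul_neg, neg_neg, mul_neg, smul_sub, smul_add]
  abel

lemma aux_pairwise_comm (T : B) : ∀ l : List ℂ, ((l.map (fun c => T - c • 1)).Pairwise Commute)
  | [] => List.Pairwise.nil
  | (c :: l) => by
    rw [List.map_cons, List.pairwise_cons]
    refine ⟨?_, aux_pairwise_comm T l⟩
    intro x hx
    obtain ⟨d, _, rfl⟩ := List.mem_map.mp hx
    exact aux_comm_fac (Commute.refl T) c d

end AuxGeneral

section AuxLists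

/-- Scalar list for the paired factorisation. -/
def ScL (r : ℕ) : List ℂ :=
  (List.range (r+1)).flatMap (fun (k : ℕ) => [2*(r:ℂ) - 2*(k:ℂ), -(2*(r:ℂ) - 2*(k:ℂ))])

/-- Scalar list for the minimal polynomial. -/
def McL (r : ℕ) : List ℂ := (List.range (2*r+1)).map (fun (j : ℕ) => 2*(j:ℂ) - 2*(r:ℂ))

lemma ScL_succ (r : ℕ) : ScL (r+1) = (2*(r:ℂ)+2) :: (-(2*(r:ℂ)+2)) :: ScL r := by
  show (List.range (r+1+1)).flatMap _ = _
  rw [List.range_succ_eq_map, List.flatMap_cons, List.flatMap_map]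
  have h1 : (fun (a : ℕ) => [2*((r+1:ℕ):ℂ) - 2*((a.succ : ℕ):ℂ), -(2*((r+1:ℕ):ℂ) - 2*((a.succ : ℕ):ℂ))])
      = (fun (k : ℕ) => [2*(r:ℂ) - 2*(k:ℂ), -(2*(r:ℂ) - 2*(k:ℂ))]) := by
    funext k
    have h : 2*((r+1:ℕ):ℂ) - 2*((k.succ : ℕ):ℂ) = 2*(r:ℂ) - 2*(k:ℂ) := by push_cast; ring
    rw [h]
  rw [h1]
  have h2 : 2*((r+1:ℕ):ℂ) - 2*((0:ℕ):ℂ) = 2*(r:ℂ)+2 := by push_cast; ring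
  simp only [h2]
  rfl

lemma McL_succ (r : ℕ) : McL (r+1) = (-(2*(r:ℂ)+2)) :: (McL r ++ [2*(r:ℂ)+2]) := by
  show (List.range (2*(r+1)+1)).map _ = _
  rw [show 2*(r+1)+1 = (2*r+1)+1+1 by ring]
  rw [List.range_succ_eq_map, List.map_cons, List.map_map]
  congr 1
  · push_cast; ring
  · have h1 : ((fun (j : ℕ) => 2*(j:ℂ) - 2*((r+1:ℕ):ℂ)) ∘ Nat.succ)
        = (fun (j : ℕ) => 2*(j:ℂ) - 2*(r:ℂ)) := by
      funext j; simp only [Function.comp_apply]; push_cast; ring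
    rw [h1, List.range_succ, List.map_append, McL]
    congr 1
    simp only [List.map_cons, List.map_nil]
    congr 1
    push_cast; ring

lemma ScL_perm (r : ℕ) : (ScL r).Perm ((0:ℂ) :: McL r) := by
  induction r with
  | zero =>
    have h1 : ScL 0 = [0, 0] := by
      show (List.range 1).flatMap _ = _
      norm_num [List.range_succ]
    have h2 : McL 0 = [0] := by
      show (List.range 1).map _ = _
      norm_num [List.range_succ]
    rw [h1, h2]
  | succ r ih =>
    rw [ScL_succ, McL_succ]
    set p : ℂ := 2*(r:ℂ)+2
    refine ((ih.cons (-p)).cons p).trans ?_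
    have e1 : ((0:ℂ) :: -p :: (McL r ++ [p])).Perm ((0:ℂ) :: -p :: (p :: McL r)) :=
      ((List.perm_append_comm).cons _).cons _
    have s1 : (p :: -p :: (0:ℂ) :: McL r).Perm (-p :: p :: (0:ℂ) :: McL r) :=
      List.Perm.swap (-p) p _
    have s2 : (-p :: p :: (0:ℂ) :: McL r).Perm (-p :: (0:ℂ) :: p :: McL r) :=
      (List.Perm.swap (0:ℂ) p _).cons (-p)
    have s3 : (-p :: (0:ℂ) :: p :: McL r).Perm ((0:ℂ) :: -p :: p :: McL r) :=
      List.Perm.swap (0:ℂ) (-p) _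
    exact (s1.trans (s2.trans s3)).trans e1.symm

end AuxLists

section AuxClifford

lemma Qf_single (r : ℕ) (i : Fin (2*r)) : Qf r (Pi.single i 1) = 1 := by
  simp [Qf, Pi.single_apply]

lemma Γsq (r : ℕ) (i : Fin (2*r)) : Γgen r i * Γgen r i = 1 := by
  rw [Γgen, CliffordAlgebra.ι_sq_scalar, Qf_single, map_one]

lemma Qf_apply (r : ℕ) (x : Fin (2*r) → ℂ) : Qf r x = ∑ m, x m * x m := by
  simp [Qf]

lemma Qf_polar_zero (r : ℕ) {i j : Fin (2*r)} (h : i ≠ j) :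
    QuadraticMap.polar (Qf r) (Pi.single i 1) (Pi.single j 1) = 0 := by
  rw [QuadraticMap.polar, Qf_apply, Qf_apply, Qf_apply, ← Finset.sum_sub_distrib,
    ← Finset.sum_sub_distrib]
  rw [Finset.sum_eq_zero]
  intro m _
  simp only [Pi.add_apply, Pi.single_apply]
  rcases eq_or_ne m i with rfl | hmi
  · simp [h]
  · simp [hmi]

lemma Γanti (r : ℕ) {i j : Fin (2*r)} (h : i ≠ j) :
    Γgen r i * Γgen r j = -(Γgen r j * Γgen r i) := by
  have := CliffordAlgebra.ι_mul_ι_add_swap (Q := Qf r) (Pi.single i 1) (Pi.single j 1)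
  rw [Qf_polar_zero r h, map_zero] at this
  exact eq_neg_of_add_eq_zero_left this

lemma Γbr_two (r : ℕ) (i : Fin 2 → Fin (2*r)) :
    Γbr r 2 i = Γgen r (i 0) * Γgen r (i 1) - (if i 0 = i 1 then 1 else 0) := by
  have huniv : (Finset.univ : Finset (Equiv.Perm (Fin 2))) = {1, Equiv.swap 0 1} := by decide
  rw [Γbr, huniv, Finset.sum_insert (by decide), Finset.sum_singleton]
  simp only [Equiv.Perm.sign_one, Equiv.Perm.sign_swap (by decide : (0 : Fin 2) ≠ 1)]
  simp only [List.ofFn_succ, List.ofFn_zero, List.prod_cons, List.prod_nil,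
    Equiv.Perm.one_apply, Equiv.swap_apply_left, Equiv.swap_apply_right]
  norm_num
  rcases eq_or_ne (i 0) (i 1) with he | hne
  · simp [he, Γsq, ← two_smul ℂ]
  · rw [if_neg hne, Γanti r (Ne.symm hne)]
    rw [smul_neg, neg_neg, sub_zero, ← two_smul ℂ, smul_smul]
    norm_num

/-- The commuting involutions `A_i = Γ_i ⊗ Γ_i`. -/
def Ai (r : ℕ) (i : Fin (2*r)) : Cl r ⊗[ℂ] Cl r := (Γgen r i) ⊗ₜ[ℂ] (Γgen r i)

lemma Ai_sq (r : ℕ) (i : Fin (2*r)) : Ai r i * Ai r i = 1 := by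
  rw [Ai, Algebra.TensorProduct.tmul_mul_tmul, Γsq, Algebra.TensorProduct.one_def]

lemma Ai_comm (r : ℕ) (i j : Fin (2*r)) : Ai r i * Ai r j = Ai r j * Ai r i := by
  rcases eq_or_ne i j with rfl | h
  · rfl
  · rw [Ai, Ai, Algebra.TensorProduct.tmul_mul_tmul, Algebra.TensorProduct.tmul_mul_tmul,
      Γanti r h]
    rw [TensorProduct.neg_tmul, TensorProduct.tmul_neg, neg_neg]

lemma Ik_two (r : ℕ) :
    Ik r 2 = (∑ i, Ai r i) * (∑ i, Ai r i) - ((2*r : ℕ) : ℂ) • 1 := by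
  rw [Finset.sum_mul_sum]
  rw [Ik]
  rw [← Equiv.sum_comp (piFinTwoEquiv (fun _ => Fin (2*r))).symm
    (fun i => (Γbr r 2 i) ⊗ₜ[ℂ] (Γbr r 2 i)), Fintype.sum_prod_type]
  have key : ∀ a b : Fin (2*r),
      (Γbr r 2 ((piFinTwoEquiv (fun _ => Fin (2*r))).symm (a, b))) ⊗ₜ[ℂ]
        (Γbr r 2 ((piFinTwoEquiv (fun _ => Fin (2*r))).symm (a, b)))
      = Ai r a * Ai r b - (if a = b then 1 else 0) := by
    intro a b
    have hi0 : (piFinTwoEquiv (fun _ => Fin (2*r))).symm (a, b) 0 = a := rfl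
    have hi1 : (piFinTwoEquiv (fun _ => Fin (2*r))).symm (a, b) 1 = b := rfl
    rw [Γbr_two, hi0, hi1]
    rcases eq_or_ne a b with rfl | h
    · simp [Γsq, Ai_sq]
    · rw [if_neg h, if_neg h, sub_zero, sub_zero, Ai, Ai, Algebra.TensorProduct.tmul_mul_tmul]
  rw [Finset.sum_congr rfl (fun a _ => Finset.sum_congr rfl (fun b _ => key a b))]
  simp only [Finset.sum_sub_distrib, Finset.sum_ite_eq, Finset.mem_univ, if_true]
  congr 1
  rw [Finset.sum_const, Finset.card_univ, Fintype.card_fin, Nat.cast_smul_eq_nsmul]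

end AuxClifford


/-- the degree-`(r+1)` characteristic identity
`Π_{k=0}^{r} (Ĉ − c_k·1) = 0`. -/
theorem sC_char_identity (r : ℕ) (hr : 2 ≤ r) :
    (((List.range (r+1)).map (fun k => sC r - cEv r k • 1)).prod : Cl r ⊗[ℂ] Cl r) = 0 := by
  have hr1 : ((r:ℂ) - 1) ≠ 0 := by
    intro h
    have h1 : (r:ℂ) = 1 := by linear_combination h
    have h2 : (r : ℕ) = 1 := by exact_mod_cast h1
    omega
  have hden : (16*(2*(r:ℂ)-2)) ≠ 0 := by
    have h : 16*(2*(r:ℂ)-2) = 32*((r:ℂ)-1) := by ring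
    rw [h]
    exact mul_ne_zero (by norm_num) hr1
  set T : Cl r ⊗[ℂ] Cl r := ∑ i, Ai r i with hT
  set s : ℂ := -(16*(2*(r:ℂ)-2))⁻¹ with hs
  have hexp : ∀ m : ℂ, (T - m • 1) * (T - (-m) • 1) = T*T - (m*m) • 1 := fun m => aux_exp T m
  have hfac : ∀ k : ℕ, sC r - cEv r k • 1
      = s • ((T - (2*(r:ℂ)-2*(k:ℂ)) • 1) * (T - (-(2*(r:ℂ)-2*(k:ℂ))) • 1)) := by
    intro k
    rw [hexp, sC, Ik_two, ← hT, ← hs]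
    rw [smul_sub, smul_sub, smul_smul, smul_smul]
    rw [sub_sub, ← add_smul]
    congr 2
    rw [cEv, hs]
    push_cast
    field_simp
    ring
  rw [List.map_congr_left (fun (k : ℕ) _ => hfac k)]
  rw [aux_smul_list_prod]
  rw [aux_flatten_pairs]
  have hmapS : (((List.range (r+1)).flatMap (fun (k : ℕ) =>
        [T - (2*(r:ℂ)-2*(k:ℂ)) • 1, T - (-(2*(r:ℂ)-2*(k:ℂ))) • 1])))
      = (ScL r).map (fun c => T - c • 1) := by
    rw [ScL, List.map_flatMap]
    simp only [List.map_cons, List.map_nil]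
  rw [hmapS]
  rw [((ScL_perm r).map (fun c => T - c • 1)).prod_eq' (aux_pairwise_comm T (ScL r))]
  rw [List.map_cons, List.prod_cons]
  have hM0 : ((McL r).map (fun c => T - c • 1)).prod = 0 := by
    have hflem := aux_Flem (2*r) (Ai r) (Ai_sq r) (Ai_comm r)
    rw [McL, List.map_map]
    have hfun : ((fun c => T - c • 1) ∘ (fun (j : ℕ) => 2*(j:ℂ) - 2*(r:ℂ)))
        = (fun (j : ℕ) => T - (2*(j:ℂ) - ((2*r : ℕ):ℂ)) • 1) := by
      funext j
      simp only [Function.comp_apply]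
      norm_cast
    rw [hfun]
    exact hflem
  rw [hM0, mul_zero, smul_zero]

end
end

section
/- For every ℂ-algebra isomorphism φ : Cl ≃ Matrix (Fin 2^r) ℂ, every integer k with 1 ≤ k ≤ 2r, and all indices i_1,...,i_k ∈ {1,...,2r}, the matrix trace of φ(Γ_{[i_1...i_k]}) is zero. -/
open scoped TensorProduct

noncomputable section

/-!
Conjugation by the involution `Γ_j` multiplies `Γ_{[i₁…i_k]}` by `(-1)^{#{m | i_m ≠ j}}`, so whenever
this exponent is odd the trace, being invariant under conjugation, equals its own negative.
Such a `j` exists: for odd `k` the `2r` fibres of `i` have sizes summing to `k`, so one of them has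
even size; for even `k`, `Γ_{[i₁…i_k]}` vanishes unless `i` is injective, and then `j = i₁` works.
-/

open Finset

theorem Matrix.trace_eq_zero_of_mul_mul_eq_neg {n R : Type*} [Fintype n] [DecidableEq n]
    [CommRing R] [IsAddTorsionFree R] {U A : Matrix n n R} (hU : U * U = 1) (hA : U * A * U = -A) :
    A.trace = 0 := by
  rw [← self_eq_neg, ← Matrix.trace_neg, ← hA, Matrix.trace_mul_cycle, hU, one_mul]

theorem List.mul_prod_mul_of_mul_self_eq_one {M : Type*} [Monoid M] {u : M} (hu : u * u = 1)
    (l : List M) : u * l.prod * u = (l.map (fun x => u * x * u)).prod := by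
  induction l with
  | nil => simpa using hu
  | cons a l ih =>
    rw [List.prod_cons, List.map_cons, List.prod_cons, ← ih]
    simp only [← mul_assoc]
    rw [mul_assoc (u * a) u u, hu, mul_one]

theorem MultilinearMap.mul_alternatization_mkPiAlgebraFin_mul {R A : Type*} [CommRing R] [Ring A]
    [Algebra R A] {u : A} (hu : u * u = 1) {k : ℕ} (v : Fin k → A) :
    u * alternatization (MultilinearMap.mkPiAlgebraFin R k A) v * u =
      alternatization (MultilinearMap.mkPiAlgebraFin R k A) (fun m => u * v m * u) := by
  simp only [alternatization_apply, Finset.mul_sum, Finset.sum_mul, mul_smul_comm, smul_mul_assoc,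
    domDomCongr_apply, mkPiAlgebraFin_apply, List.mul_prod_mul_of_mul_self_eq_one hu, List.map_ofFn]
  rfl

theorem Fintype.exists_odd_card_filter_ne {ι α : Type*} [Fintype ι] [Fintype α] [DecidableEq α]
    (hι : Odd (Fintype.card ι)) (hα : Even (Fintype.card α)) (f : ι → α) :
    ∃ a, Odd #{x | f x ≠ a} := by
  by_contra! h
  have hfiber (a : α) : Odd #{x | f x = a} := by
    have hsplit := card_filter_add_card_filter_not (s := univ) (fun x => f x = a)
    rw [card_univ] at hsplit
    exact (Nat.odd_add.mp (hsplit ▸ hι)).mpr (Nat.not_odd_iff_even.mp (h a))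
  have hsum : Fintype.card ι = ∑ a : α, #{x | f x = a} := card_eq_sum_card_fiberwise (by simp)
  rw [hsum, odd_sum_iff_odd_card_odd, filter_true_of_mem (fun a _ => hfiber a)] at hι
  exact Nat.not_odd_iff_even.mpr hα hι

theorem Function.Injective.odd_card_filter_ne {ι α : Type*} [Fintype ι] [DecidableEq ι]
    [DecidableEq α] (hι : Even (Fintype.card ι)) {f : ι → α} (hf : f.Injective) (x : ι) :
    Odd #{y | f y ≠ f x} := by
  simp only [hf.ne_iff, filter_ne', card_erase_of_mem (mem_univ x), card_univ]
  exact Nat.Even.sub_odd (Fintype.card_pos_iff.mpr ⟨x⟩) hι odd_one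

lemma Qf_apply_single (r : ℕ) (j : Fin (2*r)) : Qf r (Pi.single j 1) = 1 := by
  simp [Qf, QuadraticMap.weightedSumSquares_apply, Pi.single_apply]

lemma Γgen_mul_self (r : ℕ) (j : Fin (2*r)) : Γgen r j * Γgen r j = 1 := by
  rw [Γgen, CliffordAlgebra.ι_sq_scalar, Qf_apply_single, map_one]

lemma Γgen_mul_Γgen_of_ne (r : ℕ) {a b : Fin (2*r)} (h : a ≠ b) :
    Γgen r a * Γgen r b = -(Γgen r b * Γgen r a) := by
  refine eq_neg_of_add_eq_zero_left (CliffordAlgebra.ι_mul_ι_add_swap_of_isOrtho ?_)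
  rw [QuadraticMap.isOrtho_def]
  simp [Qf, QuadraticMap.weightedSumSquares_apply, Pi.single_apply, mul_add, sum_add_distrib, h,
    h.symm]

lemma Γgen_mul_Γgen_mul_Γgen (r : ℕ) (j a : Fin (2*r)) :
    Γgen r j * Γgen r a * Γgen r j = (if a = j then 1 else -1 : ℂ) • Γgen r a := by
  split_ifs with h
  · rw [h, Γgen_mul_self, one_mul, one_smul]
  · rw [Γgen_mul_Γgen_of_ne r (Ne.symm h), neg_mul, mul_assoc, Γgen_mul_self, mul_one, neg_one_smul]

lemma Γbr_eq_alternatization (r k : ℕ) (i : Fin k → Fin (2*r)) :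
    Γbr r k i = (k.factorial : ℂ)⁻¹ •
      MultilinearMap.alternatization (MultilinearMap.mkPiAlgebraFin ℂ k (Cl r)) (Γgen r ∘ i) := by
  simp only [Γbr, MultilinearMap.alternatization_apply, MultilinearMap.domDomCongr_apply,
    MultilinearMap.mkPiAlgebraFin_apply, Units.smul_def, Int.cast_smul_eq_zsmul, Function.comp]

lemma Γbr_eq_zero_of_not_injective (r k : ℕ) {i : Fin k → Fin (2*r)} (hi : ¬ i.Injective) :
    Γbr r k i = 0 := by
  rw [Γbr_eq_alternatization, AlternatingMap.map_eq_zero_of_not_injective _ _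
    (fun h => hi (h.of_comp)), smul_zero]

lemma Γgen_mul_Γbr_mul_Γgen (r k : ℕ) (i : Fin k → Fin (2*r)) (j : Fin (2*r)) :
    Γgen r j * Γbr r k i * Γgen r j = (-1 : ℂ) ^ #{m | i m ≠ j} • Γbr r k i := by
  rw [Γbr_eq_alternatization, mul_smul_comm, smul_mul_assoc,
    MultilinearMap.mul_alternatization_mkPiAlgebraFin_mul (Γgen_mul_self r j), smul_comm]
  simp only [Function.comp_def, Γgen_mul_Γgen_mul_Γgen, AlternatingMap.map_smul_univ, prod_ite,
    prod_const_one, one_mul, prod_const]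

lemma trace_map_Γbr_eq_zero_of_odd {r k : ℕ} {n F : Type*} [Fintype n] [DecidableEq n]
    [FunLike F (Cl r) (Matrix n n ℂ)] [RingHomClass F (Cl r) (Matrix n n ℂ)] (φ : F)
    {i : Fin k → Fin (2*r)} {j : Fin (2*r)} (h : Odd #{m | i m ≠ j}) :
    (φ (Γbr r k i)).trace = 0 :=
  Matrix.trace_eq_zero_of_mul_mul_eq_neg (U := φ (Γgen r j))
    (by rw [← map_mul, Γgen_mul_self, map_one])
    (by rw [← map_mul, ← map_mul, Γgen_mul_Γbr_mul_Γgen, h.neg_one_pow, neg_one_smul, map_neg])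

theorem Γbr_traceless_general (r : ℕ)
    (φ : Cl r ≃ₐ[ℂ] Matrix (Fin (2^r)) (Fin (2^r)) ℂ)
    (k : ℕ) (hk1 : 1 ≤ k) (i : Fin k → Fin (2*r)) :
    Matrix.trace (φ (Γbr r k i)) = 0 := by
  rcases Nat.even_or_odd k with hk | hk
  · by_cases hi : i.Injective
    · exact trace_map_Γbr_eq_zero_of_odd φ (hi.odd_card_filter_ne (by simpa using hk) ⟨0, hk1⟩)
    · rw [Γbr_eq_zero_of_not_injective r k hi, map_zero, Matrix.trace_zero]
  · obtain ⟨j, hj⟩ := Fintype.exists_odd_card_filter_ne (by simpa using hk) (by simp) i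
    exact trace_map_Γbr_eq_zero_of_odd φ hj

/-- the matrices representing `Γ_{[i₁…i_k]}`, `1 ≤ k ≤ 2r`, are traceless. -/
theorem Γbr_traceless (r : ℕ) (hr : 2 ≤ r)
    (φ : Cl r ≃ₐ[ℂ] Matrix (Fin (2^r)) (Fin (2^r)) ℂ)
    (k : ℕ) (hk1 : 1 ≤ k) (hk2 : k ≤ 2*r) (i : Fin k → Fin (2*r)) :
    Matrix.trace (φ (Γbr r k i)) = 0 :=
  Γbr_traceless_general r φ k hk1 i

end
end
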